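/- Let n and k be natural numbers with n > 3 and 1 ≤ k ≤ n−3, let S be a class of singular limit ordinals, and let ⟨C_ν : ν ∈ S⟩ be a coherent square sequence on S. Assume that the set {α < ℵ_n : cf(α) = ℵ_{n−2} and α ∈ S} is stationary in ℵ_n. Then the set {β < ℵ_n : cf(β) = ℵ_k, β ∈ S, and ot(C_β) ≥ ℵ_{n−3}} is stationary in ℵ_n. -/

import Mathlib

open Ordinal Cardinal Set

/-- `β` is a limit point of the set of ordinals `C`: `β > 0` and `β = sup (C ∩ β)`. -/
def IsLimitPt (C : Set Ordinal) (β : Ordinal) : Prop :=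
  0 < β ∧ β = sSup (C ∩ Set.Iio β)

/-- `C` is closed in `ν`: it contains all of its limit points below `ν`. -/
def ClosedIn (C : Set Ordinal) (ν : Ordinal) : Prop :=
  ∀ β < ν, IsLimitPt C β → β ∈ C

/-- `C` is unbounded (cofinal) in `ν`. -/
def UnboundedIn (C : Set Ordinal) (ν : Ordinal) : Prop :=
  sSup C = ν

/-- `C` is a closed unbounded subset of `κ`. -/
def IsClubIn (C : Set Ordinal) (κ : Ordinal) : Prop :=
  C ⊆ Set.Iio κ ∧ ClosedIn C κ ∧ UnboundedIn C κ

/-- `T` is stationary in `κ`: it meets every club subset of `κ`. -/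
def IsStationaryIn (T : Set Ordinal) (κ : Ordinal) : Prop :=
  ∀ C : Set Ordinal, IsClubIn C κ → (T ∩ C).Nonempty

/-- `ν` is a singular limit ordinal: a limit ordinal with `cf ν < ν`. -/
def IsSingLimit (ν : Ordinal) : Prop :=
  Order.IsSuccLimit ν ∧ ν.cof.ord < ν

/-- The order type of a set of ordinals. -/
noncomputable def otype (s : Set Ordinal.{0}) : Ordinal.{0} :=
  sInf {o : Ordinal.{0} | Ordinal.lift.{1, 0} o = Ordinal.type (@Subrel Ordinal.{0} (· < ·) (· ∈ s))}

/-- `⟨C ν : ν ∈ S⟩` is a coherent square sequence on a class `S` of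
singular limit ordinals. -/
def IsCoherentSquare (S : Set Ordinal) (C : Ordinal → Set Ordinal) : Prop :=
  (∀ ν ∈ S, IsSingLimit ν) ∧
  (∀ ν ∈ S, C ν ⊆ Set.Iio ν ∧ ClosedIn (C ν) ν ∧
    (Cardinal.aleph0 < ν.cof → UnboundedIn (C ν) ν)) ∧
  (∀ ν ∈ S, otype (C ν) < ν) ∧
  (∀ ν ∈ S, ∀ β < ν, IsLimitPt (C ν) β → β ∈ S ∧ C β = C ν ∩ Set.Iio β)

/-!
Given a club `D ⊆ ω_n`, its limit points form a club, so stationarity provides `α ∈ S` of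
cofinality `ℵ_{n-2}` that is a limit point of `D`. As `cf α > ω`, the sets `C_α` and `D`, both
closed and cofinal below `α`, meet cofinally below `α`. Let `β` be the supremum of the first
`ω_{n-3} + ω_k` elements of `C_α ∩ D`. Then `β ∈ D`, `cf β = ℵ_k` and `β` is a limit point of
`C_α`, so by coherence `β ∈ S` and `C_β = C_α ∩ β`, which contains the first `ω_{n-3}` of them.
-/

universe u

def IsCofinalBelow (s : Set Ordinal.{u}) (α : Ordinal.{u}) : Prop :=
  ∀ γ < α, ∃ x ∈ s, γ < x ∧ x < α

section LimitPoints

variable {s t : Set Ordinal.{u}} {α β : Ordinal.{u}}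

theorem IsCofinalBelow.mono (h : IsCofinalBelow s α) (hst : s ⊆ t) : IsCofinalBelow t α :=
  fun γ hγ =>
    let ⟨x, hx, hγx, hxα⟩ := h γ hγ
    ⟨x, hst hx, hγx, hxα⟩

theorem unboundedIn_iff_isCofinalBelow (hs : s ⊆ Iio α) :
    UnboundedIn s α ↔ IsCofinalBelow s α := by
  refine ⟨fun h γ hγ => ?_, fun h => le_antisymm (csSup_le' fun x hx => (hs hx).le) ?_⟩
  · obtain ⟨x, hx, hγx⟩ := exists_lt_of_lt_csSup' (h ▸ hγ)
    exact ⟨x, hx, hγx, hs hx⟩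
  · refine le_of_forall_lt fun γ hγ => ?_
    obtain ⟨x, hx, hγx, -⟩ := h γ hγ
    exact hγx.trans_le (le_csSup ⟨α, fun y hy => (hs hy).le⟩ hx)

theorem isLimitPt_iff : IsLimitPt s β ↔ 0 < β ∧ IsCofinalBelow s β := by
  rw [IsLimitPt, eq_comm, ← UnboundedIn, unboundedIn_iff_isCofinalBelow inter_subset_right]
  refine and_congr_right fun _ => forall₂_congr fun γ _ => ?_
  exact ⟨fun ⟨x, hx, h⟩ => ⟨x, hx.1, h⟩, fun ⟨x, hx, h⟩ => ⟨x, ⟨hx, h.2⟩, h⟩⟩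

theorem IsLimitPt.mono (h : IsLimitPt s β) (hst : s ⊆ t) : IsLimitPt t β :=
  let ⟨hβ, hs⟩ := isLimitPt_iff.1 h
  isLimitPt_iff.2 ⟨hβ, hs.mono hst⟩

theorem ClosedIn.of_le (h : ClosedIn s α) (hβα : β ≤ α) : ClosedIn s β :=
  fun γ hγ => h γ (hγ.trans_le hβα)

theorem isLimitPt_iSup {ι : Type*} [Small.{u} ι] [Nonempty ι] {g : ι → Ordinal.{u}}
    (h : ∀ i, ∃ x ∈ s, g i < x ∧ x < ⨆ i, g i) : IsLimitPt s (⨆ i, g i) := by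
  refine isLimitPt_iff.2 ⟨?_, fun γ hγ => ?_⟩
  · obtain ⟨x, -, hx, hxsup⟩ := h (Classical.arbitrary ι)
    exact zero_le.trans_lt (hx.trans hxsup)
  · obtain ⟨i, hi⟩ := Ordinal.lt_iSup_iff.1 hγ
    obtain ⟨x, hx, hix, hxsup⟩ := h i
    exact ⟨x, hx, hi.trans hix, hxsup⟩

theorem IsCofinalBelow.setOf_isLimitPt (hα : ℵ₀ < α.cof) (hs : IsCofinalBelow s α)
    (ht : IsCofinalBelow t α) : IsCofinalBelow {β | IsLimitPt s β ∧ IsLimitPt t β} α := by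
  intro γ hγ
  choose! ns hns using hs
  choose! nt hnt using ht
  -- alternate between `s` and `t` for `ω` steps; the supremum stays below `α` as `cf α > ω`
  set g : ℕ → Ordinal.{u} := fun i => (nt ∘ ns)^[i] γ
  have hg_succ (i : ℕ) : g (i + 1) = nt (ns (g i)) := Function.iterate_succ_apply' _ _ _
  have hg_lt (i : ℕ) : g i < α := by
    induction i with
    | zero => exact hγ
    | succ i ih => rw [hg_succ]; exact (hnt _ (hns _ ih).2.2).2.2
  have hg_step (i : ℕ) : g i < ns (g i) ∧ ns (g i) < g (i + 1) := by
    rw [hg_succ]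
    exact ⟨(hns _ (hg_lt i)).2.1, (hnt _ (hns _ (hg_lt i)).2.2).2.1⟩
  have hg_sup (i : ℕ) : g (i + 1) < ⨆ i, g i :=
    ((hg_step _).1.trans (hg_step _).2).trans_le (Ordinal.le_iSup g _)
  refine ⟨⨆ i, g i, ⟨isLimitPt_iSup fun i => ⟨ns (g i), (hns _ (hg_lt i)).1, (hg_step i).1,
    (hg_step i).2.trans (hg_sup i)⟩, isLimitPt_iSup fun i => ⟨g (i + 1), ?_,
    (hg_step i).1.trans (hg_step i).2, hg_sup i⟩⟩, ?_, ?_⟩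
  · rw [hg_succ]
    exact (hnt _ (hns _ (hg_lt i)).2.2).1
  · exact ((hg_step 0).1.trans (hg_step 0).2).trans_le (Ordinal.le_iSup g 1)
  · exact Ordinal.lift_iSup_lt_of_lt_cof (by simpa using hα) hg_lt

theorem IsCofinalBelow.inter (hα : ℵ₀ < α.cof) (hs : IsCofinalBelow s α)
    (ht : IsCofinalBelow t α) (hs_closed : ClosedIn s α) (ht_closed : ClosedIn t α) :
    IsCofinalBelow (s ∩ t) α := fun γ hγ => by
  obtain ⟨β, ⟨hβs, hβt⟩, hγβ, hβα⟩ := hs.setOf_isLimitPt hα ht γ hγ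
  exact ⟨β, ⟨hs_closed β hβα hβs, ht_closed β hβα hβt⟩, hγβ, hβα⟩

theorem IsClubIn.setOf_isLimitPt (hs : IsClubIn s α) (hα : ℵ₀ < α.cof) :
    IsClubIn {β | β < α ∧ IsLimitPt s β} α := by
  have hsub : {β | β < α ∧ IsLimitPt s β} ⊆ Iio α := fun β hβ => hβ.1
  have hs_cofinal := (unboundedIn_iff_isCofinalBelow hs.1).1 hs.2.2
  refine ⟨hsub, fun β hβα hβ => ⟨hβα, ?_⟩, ?_⟩
  · obtain ⟨hβ_pos, hβ_cofinal⟩ := isLimitPt_iff.1 hβ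
    refine isLimitPt_iff.2 ⟨hβ_pos, fun γ hγ => ?_⟩
    obtain ⟨x, ⟨-, hx⟩, hγx, hxβ⟩ := hβ_cofinal γ hγ
    obtain ⟨y, hy, hγy, hyx⟩ := (isLimitPt_iff.1 hx).2 γ hγx
    exact ⟨y, hy, hγy, hyx.trans hxβ⟩
  · refine (unboundedIn_iff_isCofinalBelow hsub).2 fun γ hγ => ?_
    obtain ⟨β, ⟨hβ, -⟩, hγβ, hβα⟩ := hs_cofinal.setOf_isLimitPt hα hs_cofinal γ hγ
    exact ⟨β, ⟨hβα, hβ⟩, hγβ, hβα⟩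

theorem iSup_Iio_lt_of_lt_cof_ord {ρ : Ordinal.{u}} {f : Ordinal.{u} → Ordinal.{u}}
    (hρ : ρ < α.cof.ord) (hf : ∀ η < ρ, f η < α) : ⨆ η : Iio ρ, f η < α := by
  refine Ordinal.lift_iSup_lt_of_lt_cof ?_ fun η => hf η η.2
  rw [Cardinal.mk_Iio_ordinal, Cardinal.lift_lift, ← lift_cof, Cardinal.lift_lt]
  exact Cardinal.lt_ord.1 hρ

theorem IsCofinalBelow.exists_strictMono (hs : IsCofinalBelow s α) :
    ∃ f : Ordinal.{u} → Ordinal.{u}, StrictMono f ∧ ∀ η < α.cof.ord, f η ∈ s ∧ f η < α := by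
  -- enumerate `s ∩ α`, padded by `[α, ∞)` so that `enumOrd` is strictly monotone everywhere
  set t := s ∩ Iio α ∪ Ici α
  have ht : ¬ BddAbove t := fun h => not_bddAbove_Ici α (h.mono subset_union_right)
  refine ⟨enumOrd t, enumOrd_strictMono ht, fun η => ?_⟩
  induction η using WellFoundedLT.induction with
  | _ η ih =>
    intro hη
    have hsup : ⨆ c : Iio η, enumOrd t c < α :=
      iSup_Iio_lt_of_lt_cof_ord hη fun c hc => (ih c hc (hc.trans hη)).2
    obtain ⟨x, hx, hsupx, hxα⟩ := hs _ hsup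
    have hle : enumOrd t η ≤ x := enumOrd_le_of_forall_lt (Or.inl ⟨hx, hxα⟩) fun c hc =>
      (Ordinal.le_iSup (fun c : Iio η => enumOrd t c) ⟨c, hc⟩).trans_lt hsupx
    rcases enumOrd_mem ht η with h | h
    · exact h
    · exact absurd (hle.trans_lt hxα) (not_lt.2 h)

theorem IsCofinalBelow.exists_isLimitPt {ρ : Ordinal.{u}} (hs : IsCofinalBelow s α)
    (hρ : Order.IsSuccLimit ρ) (hρα : ρ < α.cof.ord) :
    ∃ β < α, IsLimitPt s β ∧ β.cof = ρ.cof ∧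
      ∃ f : Ordinal.{u} → Ordinal.{u}, StrictMono f ∧ ∀ η < ρ, f η ∈ s ∧ f η < β := by
  obtain ⟨f, hf, hfs⟩ := hs.exists_strictMono
  have hfs' (η : Ordinal) (hη : η < ρ) := hfs η (hη.trans hρα)
  have hfβ (η : Ordinal) (hη : η < ρ) : f η < ⨆ η : Iio ρ, f η :=
    (hf (Order.lt_succ η)).trans_le
      (Ordinal.le_iSup (fun η : Iio ρ => f η) ⟨_, hρ.succ_lt hη⟩)
  refine ⟨⨆ η : Iio ρ, f η, iSup_Iio_lt_of_lt_cof_ord hρα fun η hη => (hfs' η hη).2, ?_, ?_,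
    f, hf, fun η hη => ⟨(hfs' η hη).1, hfβ η hη⟩⟩
  · have : Nonempty (Iio ρ) := ⟨⟨0, hρ.bot_lt⟩⟩
    exact isLimitPt_iSup fun η => ⟨f (Order.succ η.1), (hfs' _ (hρ.succ_lt η.2)).1,
      hf (Order.lt_succ η.1), hfβ _ (hρ.succ_lt η.2)⟩
  · exact cof_iSup_Iio (hf.comp (Subtype.strictMono_coe _)) hρ.isSuccPrelimit

end LimitPoints

-- Without a bound on `s`, the set whose infimum defines `otype s` is empty.
theorem le_otype_of_strictMono {s : Set Ordinal.{0}} {b ρ : Ordinal.{0}} (hs : s ⊆ Iio b)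
    {f : Ordinal.{0} → Ordinal.{0}} (hf : StrictMono f) (hfs : ∀ η < ρ, f η ∈ s) :
    ρ ≤ otype s := by
  set τ := Ordinal.type (@Subrel Ordinal.{0} (· < ·) (· ∈ s))
  have hτb : τ ≤ Ordinal.lift.{1} b := by
    rw [← Ordinal.type_lt_Iio b]
    exact Ordinal.type_le_iff'.2 ⟨⟨⟨fun x => ⟨x.1, hs x.2⟩, fun x y hxy => by
      simpa [Subtype.ext_iff] using hxy⟩, Iff.rfl⟩⟩
  have hotype : Ordinal.lift.{1} (otype s) = τ := csInf_mem (Ordinal.mem_range_lift_of_le hτb)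
  rw [← Ordinal.lift_le.{1}, hotype, ← Ordinal.type_lt_Iio ρ]
  exact Ordinal.type_le_iff'.2 ⟨⟨⟨fun x => ⟨f x.1, hfs x.1 x.2⟩, fun x y hxy => by
    simpa [Subtype.ext_iff, hf.injective.eq_iff] using hxy⟩, hf.lt_iff_lt⟩⟩

theorem isRegular_aleph_natCast (k : ℕ) : (ℵ_ (k : Ordinal)).IsRegular := by
  cases k with
  | zero => simpa using isRegular_aleph0
  | succ k => exact_mod_cast isRegular_aleph_add_one k

theorem aleph0_lt_aleph_natCast {k : ℕ} (hk : 0 < k) : ℵ₀ < ℵ_ (k : Ordinal) :=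
  aleph0_lt_aleph.2 (by exact_mod_cast hk)

theorem ord_aleph_natCast_add_lt {i j m : ℕ} (hi : i < m) (hj : j < m) :
    (ℵ_ (i : Ordinal)).ord + (ℵ_ (j : Ordinal)).ord < (ℵ_ (m : Ordinal)).ord := by
  rw [Cardinal.lt_ord, card_add, card_ord, card_ord]
  exact add_lt_of_lt (aleph0_le_aleph _) (aleph_lt_aleph.2 (by exact_mod_cast hi))
    (aleph_lt_aleph.2 (by exact_mod_cast hj))

theorem squareSeq_stationary_large_order_type_cof_general
    (n k : ℕ) (hn : 3 < n) (hk2 : k ≤ n - 3)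
    (S : Set Ordinal) (C : Ordinal → Set Ordinal)
    (hsq : IsCoherentSquare S C)
    (hstat : IsStationaryIn
      {α | α < (Cardinal.aleph (n : Ordinal)).ord ∧
           α.cof = Cardinal.aleph ((n - 2 : ℕ) : Ordinal) ∧ α ∈ S}
      (Cardinal.aleph (n : Ordinal)).ord) :
    IsStationaryIn
      {β | β < (Cardinal.aleph (n : Ordinal)).ord ∧
           β.cof = Cardinal.aleph (k : Ordinal) ∧ β ∈ S ∧
           (Cardinal.aleph ((n - 3 : ℕ) : Ordinal)).ord ≤ otype (C β)}
      (Cardinal.aleph (n : Ordinal)).ord := by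
  obtain ⟨-, hC_club, -, hC_coh⟩ := hsq
  intro D hD
  have hκ : ℵ₀ < (ℵ_ (n : Ordinal)).ord.cof := by
    rw [(isRegular_aleph_natCast n).cof_ord]
    exact aleph0_lt_aleph_natCast (by omega)
  obtain ⟨α, ⟨hακ, hα_cof, hαS⟩, -, hαD⟩ := hstat _ (hD.setOf_isLimitPt hκ)
  have hα : ℵ₀ < α.cof := hα_cof ▸ aleph0_lt_aleph_natCast (by omega)
  obtain ⟨hCα_sub, hCα_closed, hCα_unbdd⟩ := hC_club α hαS
  have hCD : IsCofinalBelow (C α ∩ D) α :=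
    ((unboundedIn_iff_isCofinalBelow hCα_sub).1 (hCα_unbdd hα)).inter hα
      (isLimitPt_iff.1 hαD).2 hCα_closed (hD.2.1.of_le hακ.le)
  set ρ := (ℵ_ ((n - 3 : ℕ) : Ordinal)).ord + (ℵ_ (k : Ordinal)).ord
  have hρ : Order.IsSuccLimit ρ := isSuccLimit_add _ (isSuccLimit_ord (aleph0_le_aleph _))
  have hρα : ρ < α.cof.ord := by
    rw [hα_cof]
    exact ord_aleph_natCast_add_lt (by omega) (by omega)
  obtain ⟨β, hβα, hβ, hβ_cof, f, hf, hfβ⟩ := hCD.exists_isLimitPt hρ hρα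
  obtain ⟨hβS, hCβ⟩ := hC_coh α hαS β hβα (hβ.mono inter_subset_left)
  have hβκ := hβα.trans hακ
  refine ⟨β, ⟨hβκ, ?_, hβS, ?_⟩, hD.2.1 β hβκ (hβ.mono inter_subset_right)⟩
  · rw [hβ_cof, cof_add _ (isRegular_aleph_natCast k).ord_pos.ne',
      (isRegular_aleph_natCast k).cof_ord]
  · refine (le_self_add : _ ≤ ρ).trans
      (le_otype_of_strictMono (hC_club β hβS).1 hf fun η hη => ?_)
    rw [hCβ]
    exact ⟨(hfβ η hη).1.1, (hfβ η hη).2⟩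

/-- If `{α < ℵ_n : cf α = ℵ_{n-2}, α ∈ S}` is stationary in `ℵ_n` (for `n > 3`,
`1 ≤ k ≤ n - 3`), then `{β < ℵ_n : cf β = ℵ_k, β ∈ S, ot (C_β) ≥ ℵ_{n-3}}` is
stationary in `ℵ_n`. -/
theorem squareSeq_stationary_large_order_type_cof
    (n k : ℕ) (hn : 3 < n) (hk1 : 1 ≤ k) (hk2 : k ≤ n - 3)
    (S : Set Ordinal) (C : Ordinal → Set Ordinal)
    (hsq : IsCoherentSquare S C)
    (hstat : IsStationaryIn
      {α | α < (Cardinal.aleph (n : Ordinal)).ord ∧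
           α.cof = Cardinal.aleph ((n - 2 : ℕ) : Ordinal) ∧ α ∈ S}
      (Cardinal.aleph (n : Ordinal)).ord) :
    IsStationaryIn
      {β | β < (Cardinal.aleph (n : Ordinal)).ord ∧
           β.cof = Cardinal.aleph (k : Ordinal) ∧ β ∈ S ∧
           (Cardinal.aleph ((n - 3 : ℕ) : Ordinal)).ord ≤ otype (C β)}
      (Cardinal.aleph (n : Ordinal)).ord :=
  squareSeq_stationary_large_order_type_cof_general n k hn hk2 S C hsq hstat
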